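/- arXiv:1108.5605 — 2 statements merged into one kernel-verified Lean document; each statement's English description precedes it below -/
import Mathlib

section
/- Let (f_n) be a sequence of continuous functions on an exhaustion of a domain Ω ⊆ ℂ by open sets B_1 ⊆ B_2 ⊆ ⋯ with ⋃ B_n = Ω, such that for every n, f_m − f_n is holomorphic on B_n for all m ≥ n, and |f_{n+1}(z) − f_n(z)| ≤ 2^{-n} for all z ∈ closure(B_{n-1}) ⊆ B_n. Then (f_m) converges locally uniformly on Ω to a function f such that f − f_n is holomorphic on B_n for every n. -/
/-!
On `B N` the increments `f (k + 1) - f k`, `k > N`, are bounded by `2 ^ (-k)`, so `(f k)` is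
uniformly Cauchy on every `B N`. Its pointwise limit `F` is therefore a uniform limit on each open
`B N`, hence a locally uniform one on `Ω`, and `F - f n` is the uniform limit on `B n` of the
holomorphic functions `f m - f n`, so it is holomorphic by Weierstrass' theorem.
-/

open Filter Finset

theorem uniformCauchySeqOn_of_dist_succ_le_of_summable {α E : Type*} [PseudoMetricSpace E]
    {f : ℕ → α → E} {s : Set α} {d : ℕ → ℝ} (hd : Summable d)
    (hf : ∀ᶠ n in atTop, ∀ x ∈ s, dist (f n x) (f (n + 1) x) ≤ d n) :
    UniformCauchySeqOn f atTop s := by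
  obtain ⟨N₀, hN₀⟩ := eventually_atTop.1 hf
  have hS : CauchySeq fun n => ∑ k ∈ range n, d k := hd.hasSum.tendsto_sum_nat.cauchySeq
  rw [Metric.uniformCauchySeqOn_iff]
  intro ε hε
  obtain ⟨N, hN⟩ := Metric.cauchySeq_iff.1 hS ε hε
  have key : ∀ n m, max N₀ N ≤ n → n ≤ m → ∀ x ∈ s, dist (f n x) (f m x) < ε := by
    intro n m hn hnm x hx
    calc dist (f n x) (f m x) ≤ ∑ k ∈ Ico n m, d k :=
          dist_le_Ico_sum_of_dist_le (f := (f · x)) hnm fun hk _ => hN₀ _ (by omega) x hx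
      _ = ∑ k ∈ range m, d k - ∑ k ∈ range n, d k := sum_Ico_eq_sub d hnm
      _ ≤ dist (∑ k ∈ range m, d k) (∑ k ∈ range n, d k) := le_abs_self _
      _ < ε := hN m (by omega) n (by omega)
  refine ⟨max N₀ N, fun m hm n hn x hx => ?_⟩
  rcases le_total n m with h | h
  · rw [dist_comm]
    exact key n m hn h x hx
  · exact key m n hm h x hx

theorem UniformCauchySeqOn.tendstoUniformlyOn_limUnder {α E : Type*} [UniformSpace E]
    [CompleteSpace E] [Nonempty E] {f : ℕ → α → E} {s : Set α}
    (hf : UniformCauchySeqOn f atTop s) :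
    TendstoUniformlyOn f (fun x => limUnder atTop (f · x)) atTop s :=
  hf.tendstoUniformlyOn_of_tendsto fun _ hx => (hf.cauchySeq hx).tendsto_limUnder

theorem TendstoUniformlyOn.differentiableOn_sub {ι E : Type*} [NormedAddCommGroup E]
    [NormedSpace ℂ E] [CompleteSpace E] {l : Filter ι} [l.NeBot] {F : ι → ℂ → E}
    {G g : ℂ → E} {U : Set ℂ} (hF : TendstoUniformlyOn F G l U)
    (hd : ∀ᶠ i in l, DifferentiableOn ℂ (fun z => F i z - g z) U) (hU : IsOpen U) :
    DifferentiableOn ℂ (fun z => G z - g z) U := by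
  have hg : TendstoUniformlyOn (fun _ => g) g l U := fun _ hu =>
    Eventually.of_forall fun _ _ _ => refl_mem_uniformity hu
  exact (hF.fun_sub hg).tendstoLocallyUniformlyOn.differentiableOn hd hU

theorem stmt_3_general (Ω : Set ℂ) (B : ℕ → Set ℂ) (f : ℕ → ℂ → ℂ)
    (hopen : ∀ n, IsOpen (B n)) (hmono : ∀ n, B n ⊆ B (n + 1))
    (hunion : (⋃ n, B n) = Ω)
    (hhol : ∀ n m, n ≤ m → DifferentiableOn ℂ (fun z => f m z - f n z) (B n))
    (hbound : ∀ n, ∀ z ∈ closure (B n),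
      ‖f (n + 2) z - f (n + 1) z‖ ≤ (2 : ℝ) ^ (-((n : ℤ) + 1))) :
    ∃ F : ℂ → ℂ, TendstoLocallyUniformlyOn f F atTop Ω ∧
      ∀ n, DifferentiableOn ℂ (fun z => F z - f n z) (B n) := by
  have hB : Monotone B := monotone_nat_of_le_succ hmono
  have hstep : ∀ N, ∀ᶠ k in atTop, ∀ z ∈ B N,
      dist (f k z) (f (k + 1) z) ≤ ((1 : ℝ) / 2) ^ k := by
    intro N
    filter_upwards [eventually_gt_atTop N] with k hk z hz
    obtain ⟨j, rfl⟩ : ∃ j, k = j + 1 := ⟨k - 1, by omega⟩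
    rw [dist_comm, Complex.dist_eq]
    convert hbound j z (subset_closure (hB (by omega) hz)) using 1
    rw [← zpow_natCast, div_zpow, one_zpow, one_div, ← zpow_neg]
    push_cast
    ring_nf
  have hunif : ∀ N, TendstoUniformlyOn f (fun z => limUnder atTop (f · z)) atTop (B N) :=
    fun N => (uniformCauchySeqOn_of_dist_succ_le_of_summable summable_geometric_two
      (hstep N)).tendstoUniformlyOn_limUnder
  refine ⟨_, hunion ▸ tendstoLocallyUniformlyOn_iUnion hopen
    fun N => (hunif N).tendstoLocallyUniformlyOn, fun n => ?_⟩
  exact (hunif n).differentiableOn_sub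
    ((eventually_ge_atTop n).mono fun m hm => hhol n m hm) (hopen n)

/-- Convergence step of a Mittag-Leffler/Runge-type construction: given an
exhaustion `B 0 ⊆ B 1 ⊆ ⋯` of a domain `Ω ⊆ ℂ` by open sets with
`closure (B n) ⊆ B (n+1)`, and continuous functions `f n` on `Ω` such that
`f m − f n` is holomorphic on `B n` for `m ≥ n` and
`‖f (n+2) − f (n+1)‖ ≤ 2^{-(n+1)}` on `closure (B n)`, the sequence `(f n)`
converges locally uniformly on `Ω` to a function `F` such that `F − f n` is
holomorphic on `B n` for every `n`. -/
theorem stmt_3 (Ω : Set ℂ) (B : ℕ → Set ℂ) (f : ℕ → ℂ → ℂ)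
    (hopen : ∀ n, IsOpen (B n)) (hmono : ∀ n, B n ⊆ B (n + 1))
    (hclos : ∀ n, closure (B n) ⊆ B (n + 1))
    (hunion : (⋃ n, B n) = Ω)
    (hcont : ∀ n, ContinuousOn (f n) Ω)
    (hhol : ∀ n m, n ≤ m → DifferentiableOn ℂ (fun z => f m z - f n z) (B n))
    (hbound : ∀ n, ∀ z ∈ closure (B n),
      ‖f (n + 2) z - f (n + 1) z‖ ≤ (2 : ℝ) ^ (-((n : ℤ) + 1))) :
    ∃ F : ℂ → ℂ, TendstoLocallyUniformlyOn f F atTop Ω ∧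
      ∀ n, DifferentiableOn ℂ (fun z => F z - f n z) (B n) :=
  stmt_3_general Ω B f hopen hmono hunion hhol hbound
end

section
/- Every holomorphic function on ℂP¹ \ {0, ∞} ≅ ℂ \ {0} decomposes as η_0 + η_1 where η_0 extends holomorphically to ℂP¹ \ {∞} and η_1 extends holomorphically to ℂP¹ \ {0}; equivalently, the first Čech cohomology of the structure sheaf O with respect to the two-set cover {ℂP¹ \ {∞}, ℂP¹ \ {0}} of ℂP¹ vanishes. -/
/-!
Fix `0 < r < |z| < R`. Cauchy's theorem on the annulus `r ≤ |w| ≤ R`, applied to the difference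
quotient `(σ w - σ z) / (w - z)`, gives the two-circle formula
`σ z = (2πi)⁻¹ ∮_{|w| = R} σ w / (w - z) dw - (2πi)⁻¹ ∮_{|w| = r} σ w / (w - z) dw`.
The outer integral does not depend on `R > |z|` and is holomorphic in `|z| < R`, hence defines an
entire function `η₀`. The inner integral with `r = 1` is `O(1 / |z|)` at infinity, so
`η₁ = σ - η₀` tends to `0` there.
-/

open Filter Bornology Metric Set Complex
open scoped Real

variable {E : Type*} [NormedAddCommGroup E] [NormedSpace ℂ E] {f : ℂ → E}

noncomputable def circleCauchyIntegral (f : ℂ → E) (R : ℝ) (z : ℂ) : E :=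
  (2 * π * I : ℂ)⁻¹ • ∮ w in C(0, R), (w - z)⁻¹ • f w

/-- The part of the Laurent expansion of `f` with non-negative powers of `z`. -/
noncomputable def outerPart (f : ℂ → E) (z : ℂ) : E :=
  circleCauchyIntegral f (‖z‖ + 1) z

lemma circleIntegral_eq_of_differentiableOn_annulus {c : ℂ} {r R : ℝ}
    (h0 : 0 < r) (hle : r ≤ R) (hf : DifferentiableOn ℂ f (closedBall c R \ ball c r)) :
    (∮ z in C(c, R), f z) = ∮ z in C(c, r), f z := by
  have hopen : IsOpen (ball c R \ closedBall c r) := isOpen_ball.sdiff isClosed_closedBall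
  have hsub : ball c R \ closedBall c r ⊆ closedBall c R \ ball c r :=
    sdiff_subset_sdiff ball_subset_closedBall ball_subset_closedBall
  refine circleIntegral_eq_of_differentiable_on_annulus_off_countable h0 hle countable_empty
    hf.continuousOn fun z hz => ?_
  rw [sdiff_empty] at hz
  exact (hf.mono hsub).differentiableAt (hopen.mem_nhds hz)

lemma circleIntegral_sub_inv_of_notMem_closedBall {c w : ℂ} {R : ℝ} (hR : 0 ≤ R)
    (hw : w ∉ closedBall c R) : (∮ z in C(c, R), (z - w)⁻¹) = 0 := by
  have hd : ∀ z ∈ closedBall c R, DifferentiableAt ℂ (fun z => (z - w)⁻¹) z := fun z hz =>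
    (differentiableAt_id.sub_const w).inv (sub_ne_zero.2 fun h => hw (h ▸ hz))
  exact circleIntegral_eq_zero_of_differentiable_on_off_countable hR countable_empty
    (fun z hz => (hd z hz).continuousAt.continuousWithinAt)
    fun z hz => hd z (ball_subset_closedBall hz.1)

lemma continuousOn_sphere_of_differentiableOn_compl_zero (hf : DifferentiableOn ℂ f {0}ᶜ)
    {ρ : ℝ} (hρ : 0 < ρ) : ContinuousOn f (sphere 0 ρ) :=
  hf.continuousOn.mono fun _ hw => ne_zero_of_mem_sphere hρ.ne' ⟨_, hw⟩

lemma circleCauchyIntegral_eq_of_le (hf : DifferentiableOn ℂ f {0}ᶜ) {r R : ℝ} {z : ℂ}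
    (hr : 0 < r) (hrR : r ≤ R) (hz : ‖z‖ < r) :
    circleCauchyIntegral f R z = circleCauchyIntegral f r z := by
  unfold circleCauchyIntegral
  congr 1
  refine circleIntegral_eq_of_differentiableOn_annulus hr hrR fun w hw => ?_
  have hrw : r ≤ ‖w‖ := by simpa using hw.2
  have hw0 : w ≠ 0 := norm_pos_iff.1 (hr.trans_le hrw)
  have hwz : w - z ≠ 0 := sub_ne_zero.2 fun h => (h ▸ hz).not_ge hrw
  exact (((differentiableAt_id.sub_const z).inv hwz).smul
    (hf.differentiableAt (isOpen_compl_singleton.mem_nhds hw0))).differentiableWithinAt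

lemma tendsto_circleCauchyIntegral_cobounded {R : ℝ} (hR : 0 ≤ R)
    (hf : ContinuousOn f (sphere 0 R)) :
    Tendsto (circleCauchyIntegral f R) (cobounded ℂ) (nhds 0) := by
  obtain ⟨M, hM⟩ := (isCompact_sphere (0 : ℂ) R).exists_bound_of_continuousOn hf
  have hdist : Tendsto (fun z : ℂ => ‖z‖ - R) (cobounded ℂ) atTop :=
    tendsto_atTop_add_const_right _ _ tendsto_norm_cobounded_atTop
  have hbound :
      ∀ᶠ z in cobounded ℂ, ‖circleCauchyIntegral f R z‖ ≤ R * M / (‖z‖ - R) := by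
    filter_upwards [hdist.eventually_gt_atTop 0] with z hz
    rw [mul_div_assoc]
    refine circleIntegral.norm_two_pi_i_inv_smul_integral_le_of_norm_le_const hR
      fun w hw => ?_
    have hwz : ‖z‖ - R ≤ ‖w - z‖ := by
      rw [norm_sub_rev, ← mem_sphere_zero_iff_norm.1 hw]
      exact norm_sub_norm_le z w
    rw [norm_smul, norm_inv, inv_mul_eq_div]
    exact div_le_div₀ ((norm_nonneg _).trans (hM w hw)) (hM w hw) hz hwz
  exact squeeze_zero_norm' hbound (tendsto_const_nhds.div_atTop hdist)

variable [CompleteSpace E]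

lemma circleIntegral_dslope {z : ℂ} {ρ : ℝ} (hρ : 0 ≤ ρ)
    (hf : ContinuousOn f (sphere 0 ρ)) (hz : z ∉ sphere 0 ρ) :
    (∮ w in C(0, ρ), dslope f z w) =
      (∮ w in C(0, ρ), (w - z)⁻¹ • f w) - (∮ w in C(0, ρ), (w - z)⁻¹) • f z := by
  have hinv : ContinuousOn (fun w : ℂ => (w - z)⁻¹) (sphere 0 ρ) :=
    (continuousOn_id.sub continuousOn_const).inv₀ fun w hw =>
      sub_ne_zero.2 (ne_of_mem_of_not_mem hw hz)
  have h₁ : CircleIntegrable (fun w => (w - z)⁻¹ • f w) 0 ρ :=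
    (hinv.smul hf).circleIntegrable hρ
  have h₂ : CircleIntegrable (fun w => (w - z)⁻¹ • f z) 0 ρ :=
    (hinv.smul continuousOn_const).circleIntegrable hρ
  rw [← circleIntegral.integral_smul_const, ← circleIntegral.integral_sub h₁ h₂]
  refine circleIntegral.integral_congr hρ fun w hw => ?_
  rw [dslope_of_ne f (ne_of_mem_of_not_mem hw hz), slope_def_module, smul_sub]

lemma circleCauchyIntegral_sub_circleCauchyIntegral (hf : DifferentiableOn ℂ f {0}ᶜ)
    {r R : ℝ} {z : ℂ} (hr : 0 < r) (hrz : r < ‖z‖) (hzR : ‖z‖ < R) :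
    circleCauchyIntegral f R z - circleCauchyIntegral f r z = f z := by
  have hR : 0 < R := hr.trans (hrz.trans hzR)
  have hz0 : z ≠ 0 := norm_pos_iff.1 (hr.trans hrz)
  have hg : DifferentiableOn ℂ (dslope f z) {0}ᶜ :=
    (differentiableOn_dslope (isOpen_compl_singleton.mem_nhds hz0)).2 hf
  have hannulus := circleIntegral_eq_of_differentiableOn_annulus hr (hrz.trans hzR).le
    (hg.mono fun w hw h => hw.2 (by rw [mem_singleton_iff.1 h]; exact mem_ball_self hr))
  rw [circleIntegral_dslope hR.le (continuousOn_sphere_of_differentiableOn_compl_zero hf hR)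
      (by simpa using hzR.ne),
    circleIntegral_dslope hr.le (continuousOn_sphere_of_differentiableOn_compl_zero hf hr)
      (by simpa using hrz.ne'),
    circleIntegral.integral_sub_inv_of_mem_ball (by simpa using hzR),
    circleIntegral_sub_inv_of_notMem_closedBall hr.le (by simpa using hrz),
    zero_smul, sub_zero, sub_eq_iff_eq_add'] at hannulus
  unfold circleCauchyIntegral
  rw [hannulus, ← smul_sub, add_sub_cancel_right, smul_smul, inv_mul_cancel₀ two_pi_I_ne_zero,
    one_smul]

lemma differentiableOn_circleCauchyIntegral {R : ℝ} (hf : ContinuousOn f (sphere 0 R)) :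
    DifferentiableOn ℂ (circleCauchyIntegral f R) (ball 0 R) := by
  rcases le_or_gt R 0 with hR | hR
  · simpa [ball_eq_empty.2 hR] using differentiableOn_empty
  lift R to NNReal using hR.le
  have := (hasFPowerSeriesOn_cauchy_integral (hf.circleIntegrable R.2)
    (mod_cast hR)).differentiableOn
  rwa [eball_coe] at this

lemma differentiable_outerPart (hf : DifferentiableOn ℂ f {0}ᶜ) :
    Differentiable ℂ (outerPart f) := by
  intro z₀
  have hR : 0 < ‖z₀‖ + 2 := by positivity
  have hlocal : outerPart f =ᶠ[nhds z₀] circleCauchyIntegral f (‖z₀‖ + 2) := by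
    filter_upwards [ball_mem_nhds z₀ one_pos] with z hz
    have : ‖z‖ < ‖z₀‖ + 1 := by
      linarith [norm_le_norm_add_norm_sub' z z₀, mem_ball_iff_norm.1 hz]
    exact (circleCauchyIntegral_eq_of_le hf (by positivity) (by linarith) (lt_add_one _)).symm
  refine hlocal.differentiableAt_iff.2 <|
    (differentiableOn_circleCauchyIntegral
      (continuousOn_sphere_of_differentiableOn_compl_zero hf hR)).differentiableAt
      (isOpen_ball.mem_nhds ?_)
  simp

/-- Vanishing of the first Čech cohomology of `O` for the two-set cover
`{ℂP¹ \ {∞}, ℂP¹ \ {0}}` of `ℂP¹`, in concrete terms: every function `σ`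
holomorphic on `ℂP¹ \ {0, ∞} ≅ ℂ \ {0}` decomposes as `σ = η₀ + η₁`, where `η₀`
extends holomorphically over `0` (i.e. is entire) and `η₁` is holomorphic on
`ℂ \ {0}` and extends holomorphically over `∞` (it tends to `0` there). -/
theorem stmt_7 (σ : ℂ → ℂ) (hhol : DifferentiableOn ℂ σ {(0 : ℂ)}ᶜ) :
    ∃ η₀ η₁ : ℂ → ℂ,
      Differentiable ℂ η₀ ∧
      DifferentiableOn ℂ η₁ {(0 : ℂ)}ᶜ ∧
      (∀ z : ℂ, z ≠ 0 → σ z = η₀ z + η₁ z) ∧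
      Tendsto η₁ (cobounded ℂ) (nhds 0) := by
  have hη₀ := differentiable_outerPart hhol
  refine ⟨outerPart σ, σ - outerPart σ, hη₀, hhol.sub hη₀.differentiableOn,
    fun z _ => (add_sub_cancel _ _).symm, ?_⟩
  have hinner := (tendsto_circleCauchyIntegral_cobounded zero_le_one
    (continuousOn_sphere_of_differentiableOn_compl_zero hhol one_pos)).neg
  rw [neg_zero] at hinner
  refine hinner.congr' ?_
  filter_upwards [tendsto_norm_cobounded_atTop.eventually_gt_atTop 1] with z hz
  rw [Pi.sub_apply, ← circleCauchyIntegral_sub_circleCauchyIntegral hhol one_pos hz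
    (lt_add_one ‖z‖), outerPart]
  abel
end
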